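/- Let r = [a_0; a_1, …, a_n] be a Landess (σ,k)-permutiple and let s = [b_0; b_1, …, b_m] be a continuant-preserving (τ,k)-permutiple (same multiplier k). Define the permutation π of {0, 1, …, n+m+1} by π(j) = σ(j) for 0 ≤ j ≤ n and π(n+1+j) = n+1+τ(j) for 0 ≤ j ≤ m. Then the concatenation r ∘ s = [a_0; a_1, …, a_n, b_0, b_1, …, b_m] is a continuant-preserving (π,k)-permutiple; in particular r ∘ s = k·(r' ∘ s'), where r' = [a_{σ(0)}; …, a_{σ(n)}] and s' = [b_{τ(0)}; …, b_{τ(m)}]. -/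

import Mathlib

/-!
Writing `X⁻` for `X` without its last digit and `⁺Y` for `Y` without its first, continuants
satisfy `K(XY) = K(X) K(Y) + K(X⁻) K(⁺Y)`, and `[x₀; x₁, …] = K(x₀, x₁, …) / K(x₁, …)`. Hence a
continuant-preserving pair of digit strings is a `k`-permutiple exactly when the denominators
satisfy `q' = k q`. For the concatenation `r ∘ s`, the Landess conditions `p_{n-1} = k p'_{n-1}`
and `q_{n-1} = q'_{n-1}` make the factor `k` from `⁺s'` cancel in the numerator identity and
factor out of the denominator identity, so `r ∘ s` again has `p = p'` and `q' = k q`.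
-/

/-- Value of the finite simple continued fraction `[x₀; x₁, …, xₙ]`. -/
def cfv : List ℚ → ℚ
  | [] => 0
  | [x] => x
  | x :: y :: t => x + 1 / cfv (y :: t)

/-- The continuant `K(x₀, …, xₙ)`: `K() = 1`, `K(x₀) = x₀`, and the usual
three-term recurrence. -/
def cont : List ℕ → ℕ
  | [] => 1
  | [x] => x
  | x :: y :: t => x * cont (y :: t) + cont t

/-- The digit string of `a`, as a list of rationals. -/
def digitsQ {N : ℕ} (a : Fin N → ℕ) : List ℚ := (List.ofFn a).map (fun x => (x : ℚ))

/-- `[a₀; a₁, …, aₙ]` (canonical: positive digits, last digit ≥ 2) is a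
`(σ,k)`-permutiple: it equals `k` times the continued fraction of the permuted digits. -/
def IsPermutiple {n : ℕ} (a : Fin (n+1) → ℕ) (σ : Equiv.Perm (Fin (n+1))) (k : ℕ) : Prop :=
  (∀ j, 0 < a j) ∧ 2 ≤ a (Fin.last n) ∧ 1 < k ∧
    cfv (digitsQ a) = k * cfv (digitsQ (a ∘ σ))

/-- A `(σ,k)`-permutiple is continuant-preserving if
`K(a₀,…,aₙ) = K(a_{σ(0)},…,a_{σ(n)})`. -/
def ContinuantPreserving {n : ℕ} (a : Fin (n+1) → ℕ) (σ : Equiv.Perm (Fin (n+1))) : Prop :=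
  cont (List.ofFn a) = cont (List.ofFn (a ∘ σ))

/-- A `(σ,k)`-permutiple is perfect if `a_j = k·a_{σ(j)}` for even `j` and
`a_{σ(j)} = k·a_j` for odd `j`. -/
def IsPerfect {n : ℕ} (a : Fin (n+1) → ℕ) (σ : Equiv.Perm (Fin (n+1))) (k : ℕ) : Prop :=
  ∀ j : Fin (n+1), (Even (j : ℕ) → a j = k * a (σ j)) ∧ (Odd (j : ℕ) → a (σ j) = k * a j)

/-- A `(σ,k)`-permutiple is symmetric if `a_j·a_{n−j} = a_{σ(j)}·a_{σ(n−j)}` for all `j`. -/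
def IsSymmetric {n : ℕ} (a : Fin (n+1) → ℕ) (σ : Equiv.Perm (Fin (n+1))) : Prop :=
  ∀ j : Fin (n+1), a j * a j.rev = a (σ j) * a (σ j.rev)

/-- A Landess permutiple: a continuant-preserving `(σ,k)`-permutiple with
`q_{n−1} = q'_{n−1}` and `p_{n−1} = k·p'_{n−1}`. -/
def IsLandess {n : ℕ} (a : Fin (n+1) → ℕ) (σ : Equiv.Perm (Fin (n+1))) (k : ℕ) : Prop :=
  IsPermutiple a σ k ∧ ContinuantPreserving a σ ∧
    cont ((List.ofFn a).tail.dropLast) = cont ((List.ofFn (a ∘ σ)).tail.dropLast) ∧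
    cont ((List.ofFn a).dropLast) = k * cont ((List.ofFn (a ∘ σ)).dropLast)

theorem cont_pos : ∀ {L : List ℕ}, (∀ x ∈ L, 0 < x) → 0 < cont L
  | [], _ => Nat.one_pos
  | [x], h => h x (by simp)
  | x :: y :: t, h =>
      Nat.add_pos_left (Nat.mul_pos (h x (by simp)) (cont_pos fun z hz => h z (by simp [hz]))) _

theorem cont_append : ∀ {A B : List ℕ}, A ≠ [] → B ≠ [] →
    cont (A ++ B) = cont A * cont B + cont A.dropLast * cont B.tail
  | [x], b :: bs, _, _ => by simp [cont]
  | [x, y], b :: bs, _, _ => by simp [cont]; ring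
  | x :: y :: z :: t, b :: bs, _, _ => by
      have h₁ := cont_append (A := y :: z :: t) (B := b :: bs) (by simp) (by simp)
      have h₂ := cont_append (A := z :: t) (B := b :: bs) (by simp) (by simp)
      simp only [List.cons_append, cont] at h₁ h₂ ⊢
      rw [h₁, h₂]
      simp only [List.dropLast_cons_cons, List.tail_cons, cont]
      ring

theorem cfv_map_natCast : ∀ {L : List ℕ}, L ≠ [] → (∀ x ∈ L, 0 < x) →
    cfv (L.map Nat.cast) = (cont L : ℚ) / cont L.tail
  | [x], _, _ => by simp [cfv, cont]
  | x :: y :: t, _, h => by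
      have h' : ∀ z ∈ y :: t, 0 < z := fun z hz => h z (by simp [hz])
      have hK : (cont (y :: t) : ℚ) ≠ 0 := by exact_mod_cast (cont_pos h').ne'
      simp only [List.map_cons, cfv, List.tail_cons, cont] at *
      rw [← List.map_cons, cfv_map_natCast (List.cons_ne_nil y t) h', List.tail_cons]
      push_cast
      field_simp

theorem cfv_map_natCast_eq_mul_iff {L L' : List ℕ} (hL : L ≠ []) (hL' : L' ≠ [])
    (hpos : ∀ x ∈ L, 0 < x) (hpos' : ∀ x ∈ L', 0 < x) (hcont : cont L = cont L') (k : ℕ) :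
    cfv (L.map Nat.cast) = k * cfv (L'.map Nat.cast) ↔ cont L'.tail = k * cont L.tail := by
  have tail_pos {M : List ℕ} (h : ∀ x ∈ M, 0 < x) : (cont M.tail : ℚ) ≠ 0 := by
    exact_mod_cast (cont_pos fun x hx => h x (List.mem_of_mem_tail hx)).ne'
  have hp : (cont L' : ℚ) ≠ 0 := by exact_mod_cast (cont_pos hpos').ne'
  rw [cfv_map_natCast hL hpos, cfv_map_natCast hL' hpos', hcont, mul_div_assoc',
    div_eq_div_iff (tail_pos hpos) (tail_pos hpos'), ← Nat.cast_inj (R := ℚ), Nat.cast_mul]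
  constructor <;> intro h
  · exact mul_left_cancel₀ hp (by linear_combination h)
  · linear_combination (cont L' : ℚ) * h

section Concatenation

variable {X X' Y Y' : List ℕ} {k : ℕ}

theorem cont_append_eq_of_dropLast_eq_mul (hX : X ≠ []) (hX' : X' ≠ []) (hY : Y ≠ [])
    (hY' : Y' ≠ []) (hXc : cont X = cont X') (hXd : cont X.dropLast = k * cont X'.dropLast)
    (hYc : cont Y = cont Y') (hYt : cont Y'.tail = k * cont Y.tail) :
    cont (X ++ Y) = cont (X' ++ Y') := by
  rw [cont_append hX hY, cont_append hX' hY', hXc, hXd, hYc, hYt]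
  ring

theorem cont_append_eq_mul_of_dropLast_eq (hX : X ≠ []) (hX' : X' ≠ []) (hY : Y ≠ [])
    (hY' : Y' ≠ []) (hXc : cont X' = k * cont X) (hXd : cont X.dropLast = cont X'.dropLast)
    (hYc : cont Y = cont Y') (hYt : cont Y'.tail = k * cont Y.tail) :
    cont (X' ++ Y') = k * cont (X ++ Y) := by
  rw [cont_append hX hY, cont_append hX' hY', hXc, hXd, hYc, hYt]
  ring

end Concatenation

theorem digitsQ_eq_map {N : ℕ} (a : Fin N → ℕ) : digitsQ a = (List.ofFn a).map Nat.cast := by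
  simp only [digitsQ, List.map_id']
  exact List.flatMap_pure_eq_map _ _

theorem ContinuantPreserving.cfv_eq_mul_iff {n : ℕ} {a : Fin (n+1) → ℕ}
    {σ : Equiv.Perm (Fin (n+1))} (h : ContinuantPreserving a σ) (ha : ∀ j, 0 < a j) (k : ℕ) :
    cfv (digitsQ a) = k * cfv (digitsQ (a ∘ σ)) ↔
      cont (List.ofFn (a ∘ σ)).tail = k * cont (List.ofFn a).tail :=
  digitsQ_eq_map a ▸ digitsQ_eq_map (a ∘ σ) ▸ cfv_map_natCast_eq_mul_iff (by simp) (by simp)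
    (List.forall_mem_ofFn_iff.2 ha) (List.forall_mem_ofFn_iff.2 fun j => ha (σ j)) h k

theorem Fin.append_comp_permCongr_sumCongr {α : Type*} {n m : ℕ} (a : Fin n → α)
    (b : Fin m → α) (σ : Equiv.Perm (Fin n)) (τ : Equiv.Perm (Fin m)) :
    Fin.append a b ∘ finSumFinEquiv.permCongr (σ.sumCongr τ) = Fin.append (a ∘ σ) (b ∘ τ) := by
  funext x
  obtain ⟨i | i, rfl⟩ := finSumFinEquiv.surjective x <;> simp

/-- The concatenation of a Landess `(σ,k)`-permutiple `r` with a
continuant-preserving `(τ,k)`-permutiple `s` is a continuant-preserving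
`(π,k)`-permutiple, where `π` acts as `σ` on the first block of indices and as
`τ` on the second; in particular `r ∘ s = k·(r' ∘ s')`. -/
theorem stmt16 {n m : ℕ} (a : Fin (n+1) → ℕ) (b : Fin (m+1) → ℕ)
    (σ : Equiv.Perm (Fin (n+1))) (τ : Equiv.Perm (Fin (m+1))) (k : ℕ)
    (hr : IsLandess a σ k)
    (hs : IsPermutiple b τ k) (hsC : ContinuantPreserving b τ) :
    IsPermutiple (n := n+1+m) ((Fin.append a b : Fin ((n+1)+(m+1)) → ℕ))
        ((finSumFinEquiv.permCongr (Equiv.sumCongr σ τ) : Equiv.Perm (Fin ((n+1)+(m+1))))) k ∧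
      ContinuantPreserving (n := n+1+m) ((Fin.append a b : Fin ((n+1)+(m+1)) → ℕ))
        ((finSumFinEquiv.permCongr (Equiv.sumCongr σ τ) : Equiv.Perm (Fin ((n+1)+(m+1))))) := by
  obtain ⟨⟨ha, -, hk, hcfv_a⟩, hcont_a, hq_pen, hp_pen⟩ := hr
  obtain ⟨hb, hb_last, -, hcfv_b⟩ := hs
  have hq_a := (hcont_a.cfv_eq_mul_iff ha k).1 hcfv_a
  have hq_b := (hsC.cfv_eq_mul_iff hb k).1 hcfv_b
  have hn : n ≠ 0 := by
    rintro rfl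
    simp [cont] at hq_a
    omega
  have hab (j : Fin ((n+1)+(m+1))) : 0 < Fin.append a b j := by
    refine Fin.addCases (fun i => ?_) (fun i => ?_) j <;> simp [ha, hb]
  have hcont : ContinuantPreserving (n := n+1+m) (Fin.append a b : Fin ((n+1)+(m+1)) → ℕ)
      (finSumFinEquiv.permCongr (σ.sumCongr τ) : Equiv.Perm (Fin ((n+1)+(m+1)))) := by
    rw [ContinuantPreserving, Fin.append_comp_permCongr_sumCongr, List.ofFn_fin_append,
      List.ofFn_fin_append]
    exact cont_append_eq_of_dropLast_eq_mul (by simp) (by simp) (by simp) (by simp)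
      hcont_a hp_pen hsC hq_b
  refine ⟨⟨hab, ?_, hk, (hcont.cfv_eq_mul_iff hab k).2 ?_⟩, hcont⟩
  · exact (Fin.append_right a b (Fin.last m)).symm ▸ hb_last
  rw [Fin.append_comp_permCongr_sumCongr, List.ofFn_fin_append, List.ofFn_fin_append,
    List.tail_append_of_ne_nil (by simp), List.tail_append_of_ne_nil (by simp)]
  exact cont_append_eq_mul_of_dropLast_eq (by simpa) (by simpa) (by simp) (by simp)
    hq_a hq_pen hsC hq_b
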